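/- arXiv:cs/0110025 — 3 statements merged into one kernel-verified Lean document; each statement's English description precedes it below -/
import Mathlib

section
/- Let G be a finite simple graph and let H be the ED-gadget graph of G. Then the minimum vertex cover size of H satisfies mvc(H) = 2·(mvc(G) + |V(G)|). -/
open scoped Classical

noncomputable section

/-- `C` is a vertex cover of `G`: every edge has an endpoint in `C`. -/
def IsVC {V : Type*} (G : SimpleGraph V) (C : Finset V) : Prop :=
  ∀ ⦃u w : V⦄, G.Adj u w → u ∈ C ∨ w ∈ C

/-- `mvc G` is the minimum size of a vertex cover of `G`. -/
def mvc {V : Type*} [Fintype V] (G : SimpleGraph V) : ℕ :=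
  sInf {n | ∃ C : Finset V, IsVC G C ∧ C.card = n}

/-- `M` is a matching of `G` (a set of pairwise disjoint edges of `G`). -/
def IsMatchingSet {V : Type*} (G : SimpleGraph V) (M : Finset (Sym2 V)) : Prop :=
  (∀ e ∈ M, e ∈ G.edgeSet) ∧
    ∀ e ∈ M, ∀ f ∈ M, e ≠ f → ∀ v, v ∈ e → v ∉ f

/-- `M` is a maximal matching of `G`: no edge of `G` can be added to it. -/
def IsMaximalMatchingSet {V : Type*} (G : SimpleGraph V) (M : Finset (Sym2 V)) : Prop :=
  IsMatchingSet G M ∧ ∀ e ∈ G.edgeSet, e ∉ M → ¬ IsMatchingSet G (insert e M)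

/-- `minEd G` is the minimum of `2·|M|` over all maximal matchings `M` of `G`
(the minimum size of a vertex cover producible by the edge deletion heuristic). -/
def minEd {V : Type*} [Fintype V] (G : SimpleGraph V) : ℕ :=
  sInf {n | ∃ M : Finset (Sym2 V), IsMaximalMatchingSet G M ∧ n = 2 * M.card}

/-- Degree of `v` inside the induced subgraph on the vertex set `S`. -/
def degIn {V : Type*} (G : SimpleGraph V) (S : Finset V) (v : V) : ℕ :=
  (S.filter fun w => G.Adj v w).card

/-- An MDG run: a sequence of vertices, each of maximum degree in the currently
remaining induced subgraph, whose removal leaves no edges. -/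
def IsMDGRun {V : Type*} (G : SimpleGraph V) : List V → Finset V → Prop
  | [], S => ∀ u ∈ S, ∀ w ∈ S, ¬ G.Adj u w
  | v :: L, S => v ∈ S ∧ (∀ u ∈ S, degIn G S u ≤ degIn G S v) ∧ IsMDGRun G L (S.erase v)

/-- `minMdg G`: minimum length of an MDG run on `G` (minimum size of a vertex cover
producible by the maximum-degree greedy heuristic). -/
def minMdg {V : Type*} [Fintype V] (G : SimpleGraph V) : ℕ :=
  sInf {k | ∃ L : List V, L.length = k ∧ IsMDGRun G L Finset.univ}

/-- The edge relation of the 4-vertex ED gadget: edges {v₁,v₂}, {v₃,v₄}, {v₁,v₃}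
(on indices 0,1,2,3). -/
def gadgetRel (i j : Fin 4) : Prop :=
  s(i, j) = s(0, 1) ∨ s(i, j) = s(2, 3) ∨ s(i, j) = s(0, 2)

lemma gadgetRel_symm {i j : Fin 4} (h : gadgetRel i j) : gadgetRel j i := by
  unfold gadgetRel at h ⊢
  rwa [Sym2.eq_swap]

lemma gadgetRel_irrefl (i : Fin 4) : ¬ gadgetRel i i := by
  rintro (h | h | h) <;>
    (rw [Sym2.eq_iff] at h; rcases h with ⟨h1, h2⟩ | ⟨h1, h2⟩ <;> simp_all)

/-- The ED-gadget graph of `G`: four copies `v₁,…,v₄` of each vertex, gadget edges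
inside each copy, and all 16 edges `{aᵢ,bⱼ}` for each edge `{a,b}` of `G`. -/
def edGadget {V : Type*} (G : SimpleGraph V) : SimpleGraph (V × Fin 4) where
  Adj x y := (x.1 = y.1 ∧ gadgetRel x.2 y.2) ∨ G.Adj x.1 y.1
  symm := by
    constructor
    rintro ⟨a, i⟩ ⟨b, j⟩ (⟨h1, h2⟩ | h)
    · exact Or.inl ⟨h1.symm, gadgetRel_symm h2⟩
    · exact Or.inr h.symm
  loopless := by
    constructor
    rintro ⟨a, i⟩ (⟨-, h2⟩ | h)
    · exact gadgetRel_irrefl i h2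
    · exact G.loopless.irrefl a h

/-- The join of two vertex-disjoint graphs. -/
def graphJoin {α β : Type*} (G : SimpleGraph α) (H : SimpleGraph β) :
    SimpleGraph (α ⊕ β) where
  Adj x y :=
    match x, y with
    | .inl a, .inl b => G.Adj a b
    | .inr a, .inr b => H.Adj a b
    | _, _ => True
  symm := by
    constructor
    rintro (a | a) (b | b) h
    · exact G.symm.symm _ _ h
    · exact trivial
    · exact trivial
    · exact H.symm.symm _ _ h
  loopless := by
    constructor
    rintro (a | a) h
    · exact G.loopless.irrefl a h
    · exact H.loopless.irrefl a h

/-- The disjoint union of two vertex-disjoint graphs. -/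
def graphUnion {α β : Type*} (G : SimpleGraph α) (H : SimpleGraph β) :
    SimpleGraph (α ⊕ β) where
  Adj x y :=
    match x, y with
    | .inl a, .inl b => G.Adj a b
    | .inr a, .inr b => H.Adj a b
    | _, _ => False
  symm := by
    constructor
    rintro (a | a) (b | b) h
    · exact G.symm.symm _ _ h
    · exact h.elim
    · exact h.elim
    · exact H.symm.symm _ _ h
  loopless := by
    constructor
    rintro (a | a) h
    · exact G.loopless.irrefl a h
    · exact H.loopless.irrefl a h

/-- Adjacency of the MDG-gadget graph: the gadget vertex `uᵢᵉ` for `e = {u,v}` is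
encoded as `Sum.inr (⟨(u,v), _⟩, i)`.  Edges: `{uᵢᵉ, vⱼᵉ}` for all `i, j`, plus
`{u, u₁ᵉ}` and `{v, v₁ᵉ}`. -/
def mdgAdj {V : Type*} (G : SimpleGraph V) (Δ : ℕ) :
    (V ⊕ ({p : V × V // G.Adj p.1 p.2} × Fin (Δ + 1))) →
      (V ⊕ ({p : V × V // G.Adj p.1 p.2} × Fin (Δ + 1))) → Prop
  | .inl _, .inl _ => False
  | .inl u, .inr (⟨(a, _), _⟩, i) => u = a ∧ i = 0
  | .inr (⟨(a, _), _⟩, i), .inl u => u = a ∧ i = 0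
  | .inr (⟨(a, b), _⟩, _), .inr (⟨(c, d), _⟩, _) => a = d ∧ b = c

/-- The MDG-gadget graph of `G` with parameter `Δ`. -/
def mdgGadget {V : Type*} (G : SimpleGraph V) (Δ : ℕ) :
    SimpleGraph (V ⊕ ({p : V × V // G.Adj p.1 p.2} × Fin (Δ + 1))) where
  Adj := mdgAdj G Δ
  symm := by
    constructor
    rintro (u | ⟨⟨⟨a, b⟩, hab⟩, i⟩) (v | ⟨⟨⟨c, d⟩, hcd⟩, j⟩) h
    · exact h.elim
    · exact h
    · exact h
    · exact ⟨h.2.symm, h.1.symm⟩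
  loopless := by
    constructor
    rintro (u | ⟨⟨⟨a, b⟩, hab⟩, i⟩) h
    · exact h.elim
    · exact G.ne_of_adj hab h.1

lemma mvc_le' {V : Type*} [Fintype V] (G : SimpleGraph V) {C : Finset V} (h : IsVC G C) :
    mvc G ≤ C.card := Nat.sInf_le ⟨C, h, rfl⟩

lemma mvc_spec' {V : Type*} [Fintype V] (G : SimpleGraph V) :
    ∃ C : Finset V, IsVC G C ∧ C.card = mvc G :=
  Nat.sInf_mem (s := {n | ∃ C : Finset V, IsVC G C ∧ C.card = n})
    ⟨Finset.univ.card, Finset.univ, fun u _ _ => Or.inl (Finset.mem_univ u), rfl⟩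

lemma gadgetRel_cases {i j : Fin 4} (h : gadgetRel i j) :
    (i = 0 ∨ i = 2) ∨ (j = 0 ∨ j = 2) := by
  rcases h with h | h | h <;> rw [Sym2.eq_iff] at h <;>
    rcases h with ⟨rfl, rfl⟩ | ⟨rfl, rfl⟩ <;> simp

lemma gadget_adj01 {V : Type*} (G : SimpleGraph V) (v : V) :
    (edGadget G).Adj (v, 0) (v, 1) := Or.inl ⟨rfl, Or.inl rfl⟩

lemma gadget_adj23 {V : Type*} (G : SimpleGraph V) (v : V) :
    (edGadget G).Adj (v, 2) (v, 3) := Or.inl ⟨rfl, Or.inr (Or.inl rfl)⟩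

/-- For any finite simple graph `G`, the ED-gadget graph `H = edGadget G`
satisfies `mvc(H) = 2·(mvc(G) + |V(G)|)`. -/
theorem stmt0 {V : Type*} [Fintype V] (G : SimpleGraph V) :
    mvc (edGadget G) = 2 * (mvc G + Fintype.card V) := by
  obtain ⟨C, hC, hCcard⟩ := mvc_spec' G
  have hCle : C.card ≤ Fintype.card V := Finset.card_le_univ C
  apply le_antisymm
  · -- upper bound
    set D : Finset (V × Fin 4) := C ×ˢ Finset.univ ∪ Cᶜ ×ˢ ({0, 2} : Finset (Fin 4)) with hD
    have hDvc : IsVC (edGadget G) D := by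
      rintro ⟨a, i⟩ ⟨b, j⟩ (⟨heq, hg⟩ | hadj)
      · by_cases ha : a ∈ C
        · exact Or.inl (Finset.mem_union_left _ (Finset.mk_mem_product ha (Finset.mem_univ _)))
        · rcases gadgetRel_cases hg with hi | hj
          · refine Or.inl (Finset.mem_union_right _ (Finset.mk_mem_product (by simpa using ha) ?_))
            rcases hi with rfl | rfl <;> simp
          · refine Or.inr (Finset.mem_union_right _ (Finset.mk_mem_product ?_ ?_))
            · have hab : a = b := heq
              subst hab; simpa using ha
            · rcases hj with rfl | rfl <;> simp
      · rcases hC hadj with h | h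
        · exact Or.inl (Finset.mem_union_left _ (Finset.mk_mem_product h (Finset.mem_univ _)))
        · exact Or.inr (Finset.mem_union_left _ (Finset.mk_mem_product h (Finset.mem_univ _)))
    have hdisj : Disjoint (C ×ˢ (Finset.univ : Finset (Fin 4))) (Cᶜ ×ˢ ({0, 2} : Finset (Fin 4))) := by
      rw [Finset.disjoint_left]
      rintro ⟨a, i⟩ h1 h2
      rw [Finset.mem_product] at h1 h2
      exact (Finset.mem_compl.mp h2.1) h1.1
    have hcard : D.card = C.card * 4 + (Fintype.card V - C.card) * 2 := by
      rw [hD, Finset.card_union_of_disjoint hdisj, Finset.card_product, Finset.card_product,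
        Finset.card_compl]
      have : ({0, 2} : Finset (Fin 4)).card = 2 := by decide
      rw [this, Finset.card_univ, Fintype.card_fin]
    calc mvc (edGadget G) ≤ D.card := mvc_le' _ hDvc
      _ = 2 * (mvc G + Fintype.card V) := by rw [hcard, ← hCcard]; omega
  · -- lower bound
    obtain ⟨D, hD, hDcard⟩ := mvc_spec' (edGadget G)
    set E : Finset V := Finset.univ.filter (fun v => ∀ i : Fin 4, (v, i) ∈ D) with hE
    have hEvc : IsVC G E := by
      intro a b hab
      by_cases ha : a ∈ E
      · exact Or.inl ha
      · right
        rw [hE, Finset.mem_filter] at ha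
        push_neg at ha
        obtain ⟨i, hi⟩ := ha (Finset.mem_univ a)
        rw [hE, Finset.mem_filter]
        refine ⟨Finset.mem_univ b, fun j => ?_⟩
        rcases hD (Or.inr hab : (edGadget G).Adj (a, i) (b, j)) with h | h
        · exact absurd h hi
        · exact h
    have hfib : D.card = ∑ v : V, (D.filter (fun x => x.1 = v)).card :=
      Finset.card_eq_sum_card_fiberwise (fun x _ => Finset.mem_univ x.1)
    have hbound : ∀ v : V, (if v ∈ E then 4 else 2) ≤ (D.filter (fun x => x.1 = v)).card := by
      intro v
      by_cases hv : v ∈ E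
      · simp only [hv, if_true]
        have hsub : (Finset.univ : Finset (Fin 4)).image (fun i => (v, i)) ⊆
            D.filter (fun x => x.1 = v) := by
          intro x hx
          simp only [Finset.mem_image] at hx
          obtain ⟨i, -, rfl⟩ := hx
          rw [hE, Finset.mem_filter] at hv
          exact Finset.mem_filter.mpr ⟨hv.2 i, rfl⟩
        calc (4 : ℕ) = ((Finset.univ : Finset (Fin 4)).image (fun i => (v, i))).card := by
              rw [Finset.card_image_of_injective _ (fun a b h => (Prod.mk.injEq _ _ _ _).mp h |>.2)]
              simp
          _ ≤ _ := Finset.card_le_card hsub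
      · simp only [hv, if_false]
        have h1 := hD (gadget_adj01 G v)
        have h2 := hD (gadget_adj23 G v)
        have hx : ∃ x ∈ D.filter (fun x => x.1 = v), (x.2 = (0 : Fin 4) ∨ x.2 = 1) := by
          rcases h1 with h | h
          · exact ⟨(v, 0), Finset.mem_filter.mpr ⟨h, rfl⟩, Or.inl rfl⟩
          · exact ⟨(v, 1), Finset.mem_filter.mpr ⟨h, rfl⟩, Or.inr rfl⟩
        have hy : ∃ y ∈ D.filter (fun x => x.1 = v), (y.2 = (2 : Fin 4) ∨ y.2 = 3) := by
          rcases h2 with h | h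
          · exact ⟨(v, 2), Finset.mem_filter.mpr ⟨h, rfl⟩, Or.inl rfl⟩
          · exact ⟨(v, 3), Finset.mem_filter.mpr ⟨h, rfl⟩, Or.inr rfl⟩
        obtain ⟨x, hxm, hxi⟩ := hx
        obtain ⟨y, hym, hyi⟩ := hy
        have hne : x ≠ y := by
          intro h; subst h
          rcases hxi with h | h <;> rcases hyi with h' | h' <;> rw [h] at h' <;> exact absurd h' (by decide)
        exact Finset.one_lt_card.mpr ⟨x, hxm, y, hym, hne⟩
    have hsum : ∑ v : V, (if v ∈ E then 4 else 2) ≤ ∑ v : V, (D.filter (fun x => x.1 = v)).card :=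
      Finset.sum_le_sum (fun v _ => hbound v)
    have hval : ∑ v : V, (if v ∈ E then (4:ℕ) else 2) = 4 * E.card + 2 * (Fintype.card V - E.card) := by
      rw [← Finset.sum_sdiff (Finset.subset_univ E)]
      have h1 : ∑ v ∈ Finset.univ \ E, (if v ∈ E then (4:ℕ) else 2)
          = 2 * (Fintype.card V - E.card) := by
        rw [Finset.sum_congr rfl (fun v hv => if_neg (Finset.mem_sdiff.mp hv).2),
          Finset.sum_const, Finset.card_sdiff_of_subset (Finset.subset_univ E), Finset.card_univ,
          smul_eq_mul, mul_comm]
      have h2 : ∑ v ∈ E, (if v ∈ E then (4:ℕ) else 2) = 4 * E.card := by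
        rw [Finset.sum_congr rfl (fun v hv => if_pos hv), Finset.sum_const, smul_eq_mul, mul_comm]
      rw [h1, h2]; omega
    have hElen : E.card ≤ Fintype.card V := Finset.card_le_univ E
    have hmle : mvc G ≤ E.card := mvc_le' G hEvc
    omega


end
end

section
/- Let G be a finite simple graph with maximum degree Δ = max-deg(G), and let H be the MDG-gadget graph of G. Then mvc(H) = mvc(G) + |E(G)|·(Δ + 1). -/
open scoped Classical

noncomputable section

section MDGAux

variable {V : Type*} [Fintype V]

lemma mvc_le_card (G : SimpleGraph V) {C : Finset V} (h : IsVC G C) :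
    mvc G ≤ C.card := Nat.sInf_le ⟨C, h, rfl⟩

lemma exists_mvc (G : SimpleGraph V) : ∃ C : Finset V, IsVC G C ∧ C.card = mvc G := by
  have h : {n | ∃ C : Finset V, IsVC G C ∧ C.card = n}.Nonempty :=
    ⟨Finset.univ.card, Finset.univ, fun u _ _ => Or.inl (Finset.mem_univ u), rfl⟩
  exact Nat.sInf_mem h

/-- swap an ordered edge -/
def swapE {G : SimpleGraph V} (p : {p : V × V // G.Adj p.1 p.2}) :
    {p : V × V // G.Adj p.1 p.2} := ⟨(p.1.2, p.1.1), p.2.symm⟩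

lemma adj_inl_inr (G : SimpleGraph V) (Δ : ℕ) (u : V)
    (p : {p : V × V // G.Adj p.1 p.2}) (i : Fin (Δ + 1)) :
    (mdgGadget G Δ).Adj (Sum.inl u) (Sum.inr (p, i)) ↔ u = p.1.1 ∧ i = 0 := by
  obtain ⟨⟨a, b⟩, h⟩ := p; exact Iff.rfl

lemma adj_inr_inr (G : SimpleGraph V) (Δ : ℕ)
    (p q : {p : V × V // G.Adj p.1 p.2}) (i j : Fin (Δ + 1)) :
    (mdgGadget G Δ).Adj (Sum.inr (p, i)) (Sum.inr (q, j)) ↔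
      p.1.1 = q.1.2 ∧ p.1.2 = q.1.1 := by
  obtain ⟨⟨a, b⟩, h⟩ := p; obtain ⟨⟨c, d⟩, h'⟩ := q; exact Iff.rfl

lemma mdg_upper (G : SimpleGraph V) (Δ : ℕ) :
    mvc (mdgGadget G Δ) ≤ mvc G + G.edgeFinset.card * (Δ + 1) := by
  obtain ⟨C, hC, hCcard⟩ := exists_mvc G
  letI : LinearOrder V := LinearOrder.lift' (Fintype.equivFin V) (Fintype.equivFin V).injective
  set chosen : {p : V × V // G.Adj p.1 p.2} → Prop :=
    fun p => p.1.1 ∉ C ∨ (p.1.2 ∈ C ∧ p.1.1 < p.1.2) with hchosen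
  have hone : ∀ p, chosen p ∨ chosen (swapE p) := by
    intro p
    by_cases h1 : p.1.1 ∈ C
    · by_cases h2 : p.1.2 ∈ C
      · rcases lt_or_gt_of_ne (G.ne_of_adj p.2) with hl | hl
        · exact Or.inl (Or.inr ⟨h2, hl⟩)
        · exact Or.inr (Or.inr ⟨h1, hl⟩)
      · exact Or.inr (Or.inl h2)
    · exact Or.inl (Or.inl h1)
  have hnotboth : ∀ p, chosen p → chosen (swapE p) → False := by
    intro p hp hq
    rcases hp with h1 | ⟨h1, h1'⟩ <;> rcases hq with h2 | ⟨h2, h2'⟩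
    · rcases hC p.2 with h | h <;> contradiction
    · exact h1 h2
    · exact h2 h1
    · exact lt_asymm h1' h2'
  set CH : Finset (V ⊕ ({p : V × V // G.Adj p.1 p.2} × Fin (Δ + 1))) :=
    C.image Sum.inl ∪
      ((Finset.univ.filter chosen) ×ˢ (Finset.univ : Finset (Fin (Δ + 1)))).image Sum.inr
    with hCH
  have hmemCH : ∀ (p) (i : Fin (Δ + 1)), chosen p → Sum.inr (p, i) ∈ CH := by
    intro p i hp
    refine Finset.mem_union_right _ (Finset.mem_image.mpr ⟨(p, i), ?_, rfl⟩)
    exact Finset.mem_product.mpr ⟨Finset.mem_filter.mpr ⟨Finset.mem_univ _, hp⟩,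
      Finset.mem_univ _⟩
  have hvc : IsVC (mdgGadget G Δ) CH := by
    rintro (u | ⟨p, i⟩) (w | ⟨q, j⟩) hadj
    · exact hadj.elim
    · rw [adj_inl_inr] at hadj
      obtain ⟨rfl, rfl⟩ := hadj
      by_cases h1 : q.1.1 ∈ C
      · exact Or.inl (Finset.mem_union_left _ (Finset.mem_image.mpr ⟨_, h1, rfl⟩))
      · exact Or.inr (hmemCH q 0 (Or.inl h1))
    · have hadj' := (mdgGadget G Δ).symm.symm _ _ hadj
      rw [adj_inl_inr] at hadj'
      obtain ⟨rfl, rfl⟩ := hadj'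
      by_cases h1 : p.1.1 ∈ C
      · exact Or.inr (Finset.mem_union_left _ (Finset.mem_image.mpr ⟨_, h1, rfl⟩))
      · exact Or.inl (hmemCH p 0 (Or.inl h1))
    · rw [adj_inr_inr] at hadj
      have hq : q = swapE p := by
        apply Subtype.ext
        obtain ⟨⟨a, b⟩, h⟩ := p; obtain ⟨⟨c, d⟩, h'⟩ := q
        simp only [swapE]
        exact Prod.ext hadj.2.symm hadj.1.symm
      rcases hone p with h | h
      · exact Or.inl (hmemCH p i h)
      · exact Or.inr (hmemCH q j (hq ▸ h))
  have hcount : (Finset.univ.filter chosen).card = G.edgeFinset.card := by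
    apply Finset.card_bij (fun p _ => s(p.1.1, p.1.2))
    · intro p hp
      rw [SimpleGraph.mem_edgeFinset, SimpleGraph.mem_edgeSet]
      exact p.2
    · intro p hp q hq heq
      rw [Sym2.eq_iff] at heq
      rcases heq with ⟨h1, h2⟩ | ⟨h1, h2⟩
      · exact Subtype.ext (Prod.ext h1 h2)
      · exfalso
        have hq' : q = swapE p := by
          apply Subtype.ext
          exact Prod.ext h2.symm h1.symm
        exact hnotboth p (Finset.mem_filter.mp hp).2 (hq' ▸ (Finset.mem_filter.mp hq).2)
    · intro e he
      induction e using Sym2.ind with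
      | _ a b =>
        have hab : G.Adj a b := by
          rwa [SimpleGraph.mem_edgeFinset, SimpleGraph.mem_edgeSet] at he
        rcases hone ⟨(a, b), hab⟩ with h | h
        · exact ⟨⟨(a, b), hab⟩, Finset.mem_filter.mpr ⟨Finset.mem_univ _, h⟩, rfl⟩
        · exact ⟨swapE ⟨(a, b), hab⟩, Finset.mem_filter.mpr ⟨Finset.mem_univ _, h⟩,
            Sym2.eq_swap⟩
  have hcard : CH.card ≤ mvc G + G.edgeFinset.card * (Δ + 1) := by
    calc CH.card ≤ (C.image Sum.inl).card +
        (((Finset.univ.filter chosen) ×ˢ (Finset.univ : Finset (Fin (Δ + 1)))).image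
          Sum.inr).card := Finset.card_union_le _ _
      _ ≤ C.card + (Finset.univ.filter chosen).card * (Δ + 1) := by
          rw [Finset.card_image_of_injective _ Sum.inl_injective,
            Finset.card_image_of_injective _ Sum.inr_injective, Finset.card_product]
          simp
      _ = mvc G + G.edgeFinset.card * (Δ + 1) := by rw [hCcard, hcount]
  exact le_trans (mvc_le_card _ hvc) hcard

lemma mdg_lower (G : SimpleGraph V) (Δ : ℕ) :
    mvc G + G.edgeFinset.card * (Δ + 1) ≤ mvc (mdgGadget G Δ) := by
  obtain ⟨C, hC, hCcard⟩ := exists_mvc (mdgGadget G Δ)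
  have hside : ∀ p : {p : V × V // G.Adj p.1 p.2},
      (∀ i, Sum.inr (p, i) ∈ C) ∨ (∀ j, Sum.inr (swapE p, j) ∈ C) := by
    intro p
    by_contra h
    push_neg at h
    obtain ⟨⟨i, hi⟩, ⟨j, hj⟩⟩ := h
    have hadj : (mdgGadget G Δ).Adj (Sum.inr (p, i)) (Sum.inr (swapE p, j)) :=
      (adj_inr_inr G Δ p (swapE p) i j).mpr ⟨rfl, rfl⟩
    rcases hC hadj with h | h <;> contradiction
  set bad : Sym2 V → Prop := fun e => ∀ v ∈ e, Sum.inl v ∉ C with hbaddef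
  set f : (V ⊕ ({p : V × V // G.Adj p.1 p.2} × Fin (Δ + 1))) → Sym2 V :=
    Sum.elim (fun u => s(u, u)) (fun x => s(x.1.1.1, x.1.1.2)) with hf
  set Cl : Finset _ := C.filter (fun x => ∃ u, x = Sum.inl u) with hCl
  set Cr : Finset _ := C.filter (fun x => ¬ ∃ u, x = Sum.inl u) with hCr
  have hsplit : Cl.card + Cr.card = C.card :=
    Finset.card_filter_add_card_filter_not _
  have hfib : Cr.card = ∑ e ∈ G.edgeFinset, (Cr.filter (fun x => f x = e)).card := by
    apply Finset.card_eq_sum_card_fiberwise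
    rintro (u | ⟨p, i⟩) hx
    · exact absurd ⟨u, rfl⟩ (Finset.mem_filter.mp hx).2
    · simp only [hf, Sum.elim_inr, Finset.mem_coe, SimpleGraph.mem_edgeFinset, SimpleGraph.mem_edgeSet]
      exact p.2
  have key : ∀ e ∈ G.edgeFinset,
      (Δ + 1) + (if bad e then 1 else 0) ≤ (Cr.filter (fun x => f x = e)).card := by
    intro e
    induction e using Sym2.ind with
    | _ a b =>
      intro he
      have hab : G.Adj a b := by
        rwa [SimpleGraph.mem_edgeFinset, SimpleGraph.mem_edgeSet] at he
      obtain ⟨q, hall, hqe⟩ :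
          ∃ q : {p : V × V // G.Adj p.1 p.2},
            (∀ i, Sum.inr (q, i) ∈ C) ∧ s(q.1.1, q.1.2) = s(a, b) := by
        rcases hside ⟨(a, b), hab⟩ with h | h
        · exact ⟨⟨(a, b), hab⟩, h, rfl⟩
        · exact ⟨swapE ⟨(a, b), hab⟩, h, Sym2.eq_swap⟩
      set T : Finset (V ⊕ ({p : V × V // G.Adj p.1 p.2} × Fin (Δ + 1))) :=
        Finset.univ.image (fun i : Fin (Δ + 1) => Sum.inr (q, i)) with hT
      have hTcard : T.card = Δ + 1 := by
        rw [Finset.card_image_of_injective, Finset.card_univ, Fintype.card_fin]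
        intro i j hij
        simpa using hij
      have hTsub : T ⊆ Cr.filter (fun x => f x = s(a, b)) := by
        intro x hx
        obtain ⟨i, -, rfl⟩ := Finset.mem_image.mp hx
        refine Finset.mem_filter.mpr ⟨Finset.mem_filter.mpr ⟨hall i, ?_⟩, hqe⟩
        rintro ⟨u, h⟩
        exact Sum.inr_ne_inl h
      by_cases hb : bad s(a, b)
      · have hq2 : (q.1.2 : V) ∈ s(a, b) := hqe ▸ Sym2.mem_mk_right _ _
        have hpend : (mdgGadget G Δ).Adj (Sum.inl q.1.2) (Sum.inr (swapE q, 0)) :=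
          (adj_inl_inr G Δ q.1.2 (swapE q) 0).mpr ⟨rfl, rfl⟩
        have hextra : Sum.inr (swapE q, (0 : Fin (Δ + 1))) ∈ C := by
          rcases hC hpend with h | h
          · exact absurd h (hb _ hq2)
          · exact h
        have hnotin : Sum.inr (swapE q, (0 : Fin (Δ + 1))) ∉ T := by
          intro hmem
          obtain ⟨i, -, hi⟩ := Finset.mem_image.mp hmem
          have h1 : q = swapE q := (Prod.ext_iff.mp (Sum.inr_injective hi)).1
          have h2 : q.1.1 = q.1.2 := (Prod.ext_iff.mp (congrArg Subtype.val h1)).1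
          exact G.ne_of_adj q.2 h2
        have hsub2 : insert (Sum.inr (swapE q, (0 : Fin (Δ + 1)))) T ⊆
            Cr.filter (fun x => f x = s(a, b)) := by
          intro x hx
          rcases Finset.mem_insert.mp hx with rfl | hx
          · refine Finset.mem_filter.mpr ⟨Finset.mem_filter.mpr ⟨hextra, ?_⟩, ?_⟩
            · rintro ⟨u, h⟩; exact Sum.inr_ne_inl h
            · show s((swapE q).1.1, (swapE q).1.2) = s(a, b)
              rw [show (swapE q).1.1 = q.1.2 from rfl, show (swapE q).1.2 = q.1.1 from rfl,
                Sym2.eq_swap]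
              exact hqe
          · exact hTsub hx
        calc (Δ + 1) + (if bad s(a, b) then 1 else 0) = (Δ + 1) + 1 := by rw [if_pos hb]
          _ = (insert (Sum.inr (swapE q, (0 : Fin (Δ + 1)))) T).card := by
              rw [Finset.card_insert_of_notMem hnotin, hTcard]
          _ ≤ _ := Finset.card_le_card hsub2
      · calc (Δ + 1) + (if bad s(a, b) then 1 else 0) = Δ + 1 := by rw [if_neg hb]
          _ = T.card := hTcard.symm
          _ ≤ _ := Finset.card_le_card hTsub
  have hsum : G.edgeFinset.card * (Δ + 1) + (G.edgeFinset.filter bad).card ≤ Cr.card := by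
    rw [hfib]
    calc G.edgeFinset.card * (Δ + 1) + (G.edgeFinset.filter bad).card
        = ∑ e ∈ G.edgeFinset, ((Δ + 1) + (if bad e then 1 else 0)) := by
          rw [Finset.sum_add_distrib, Finset.sum_const, smul_eq_mul, ← Finset.card_filter]
      _ ≤ _ := Finset.sum_le_sum key
  set CG : Finset V := (Finset.univ.filter fun u => Sum.inl u ∈ C) ∪
    (G.edgeFinset.filter bad).image (fun e => e.out.1) with hCG
  have hCGvc : IsVC G CG := by
    intro u w huw
    by_cases hb : bad s(u, w)
    · have hmem : s(u, w) ∈ G.edgeFinset.filter bad := by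
        rw [Finset.mem_filter, SimpleGraph.mem_edgeFinset, SimpleGraph.mem_edgeSet]
        exact ⟨huw, hb⟩
      have hout : (s(u, w)).out.1 ∈ s(u, w) := Sym2.out_fst_mem _
      rcases Sym2.mem_iff.mp hout with h | h
      · exact Or.inl (Finset.mem_union_right _ (Finset.mem_image.mpr ⟨_, hmem, h⟩))
      · exact Or.inr (Finset.mem_union_right _ (Finset.mem_image.mpr ⟨_, hmem, h⟩))
    · have hb' : ∃ v ∈ s(u, w), Sum.inl v ∈ C := by
        by_contra hc
        push_neg at hc
        exact hb hc
      obtain ⟨v, hv, hvC⟩ := hb'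
      rcases Sym2.mem_iff.mp hv with rfl | rfl
      · exact Or.inl (Finset.mem_union_left _
          (Finset.mem_filter.mpr ⟨Finset.mem_univ _, hvC⟩))
      · exact Or.inr (Finset.mem_union_left _
          (Finset.mem_filter.mpr ⟨Finset.mem_univ _, hvC⟩))
  have hClcard : (Finset.univ.filter fun u => Sum.inl u ∈ C).card = Cl.card := by
    apply Finset.card_bij (fun u _ => Sum.inl u)
    · intro u hu
      exact Finset.mem_filter.mpr ⟨(Finset.mem_filter.mp hu).2, ⟨u, rfl⟩⟩
    · intro u _ v _ h
      exact Sum.inl_injective h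
    · intro x hx
      obtain ⟨hxC, u, rfl⟩ := Finset.mem_filter.mp hx
      exact ⟨u, Finset.mem_filter.mpr ⟨Finset.mem_univ _, hxC⟩, rfl⟩
  have hCGcard : CG.card ≤ Cl.card + (G.edgeFinset.filter bad).card := by
    calc CG.card ≤ (Finset.univ.filter fun u => Sum.inl u ∈ C).card +
        ((G.edgeFinset.filter bad).image (fun e => e.out.1)).card :=
          Finset.card_union_le _ _
      _ ≤ Cl.card + (G.edgeFinset.filter bad).card := by
          rw [hClcard]
          exact Nat.add_le_add_left (Finset.card_image_le) _
  have h1 : mvc G ≤ CG.card := mvc_le_card G hCGvc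
  omega

end MDGAux

/-- For the MDG-gadget graph `H` of `G` (with `Δ = max-deg(G)`),
`mvc(H) = mvc(G) + |E(G)|·(Δ + 1)`. -/
theorem stmt9 {V : Type*} [Fintype V] (G : SimpleGraph V) :
    mvc (mdgGadget G G.maxDegree) =
      mvc G + G.edgeFinset.card * (G.maxDegree + 1) :=
  le_antisymm (mdg_upper G G.maxDegree) (mdg_lower G G.maxDegree)

end
end

section
/- There exists a positive integer N such that for all integers μ ≥ N, δ ≥ 1, n₁ ≥ 1, n₂ ≥ 1 satisfying μ·(ln μ − 2·ln(δ+2) − 1) ≥ n₁ + n₂ and δ + 3 ≤ μ − 1, one has ⌊μ/(δ+3)⌋ + ⌊μ/(δ+4)⌋ + ⋯ + ⌊μ/(μ−1)⌋ ≥ n₁ + μ + n₂. -/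
set_option maxHeartbeats 1000000

/-- Harmonic sum lower bound: `log(b+1) - log a ≤ ∑_{i=a}^{b} 1/i`. -/
lemma harm_lb (a b : ℕ) (ha : 1 ≤ a) :
    Real.log (b + 1) - Real.log a ≤ ∑ i ∈ Finset.Ico a (b + 1), (1 : ℝ) / i := by
  have e1 : ∀ n : ℕ, ∑ k ∈ Finset.range n,
      (Real.log ((k : ℝ) + 1) - Real.log k) = Real.log n := by
    intro n
    induction n with
    | zero => simp
    | succ n ih =>
      rw [Finset.sum_range_succ, ih]
      push_cast
      ring
  rcases le_or_gt a (b + 1) with h | h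
  · have htel : ∑ i ∈ Finset.Ico a (b + 1),
        (Real.log ((i : ℝ) + 1) - Real.log i) = Real.log (b + 1) - Real.log a := by
      rw [Finset.sum_Ico_eq_sub _ h, e1, e1]
      push_cast
      ring
    rw [← htel]
    apply Finset.sum_le_sum
    intro i hi
    have hi1 : 1 ≤ i := le_trans ha (Finset.mem_Ico.mp hi).1
    have hipos : (0 : ℝ) < i := by exact_mod_cast hi1
    have h1 : Real.log (((i : ℝ) + 1) / i) ≤ ((i : ℝ) + 1) / i - 1 :=
      Real.log_le_sub_one_of_pos (by positivity)
    rw [Real.log_div (by positivity) (ne_of_gt hipos)] at h1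
    have h2 : ((i : ℝ) + 1) / i - 1 = 1 / i := by field_simp; ring
    linarith [h2 ▸ h1]
  · rw [Finset.Ico_eq_empty (by omega)]
    simp only [Finset.sum_empty]
    have : Real.log (b + 1) ≤ Real.log a := by
      apply Real.log_le_log (by positivity)
      exact_mod_cast Nat.le_of_lt h
    linarith

/-- there is `N` such that for all `μ ≥ N`, `δ, n₁, n₂ ≥ 1` with
`μ(ln μ − 2 ln(δ+2) − 1) ≥ n₁ + n₂` and `δ + 3 ≤ μ − 1`, one has
`⌊μ/(δ+3)⌋ + ⌊μ/(δ+4)⌋ + ⋯ + ⌊μ/(μ−1)⌋ ≥ n₁ + μ + n₂`. -/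
theorem stmt15 :
    ∃ N : ℕ, 0 < N ∧ ∀ μ δ n₁ n₂ : ℕ, N ≤ μ → 1 ≤ δ → 1 ≤ n₁ → 1 ≤ n₂ →
      (μ : ℝ) * (Real.log μ - 2 * Real.log (δ + 2) - 1) ≥ n₁ + n₂ →
      δ + 3 ≤ μ - 1 →
      n₁ + μ + n₂ ≤ ∑ i ∈ Finset.Icc (δ + 3) (μ - 1), μ / i := by
  refine ⟨1, Nat.one_pos, ?_⟩
  intro μ δ n₁ n₂ hNμ hδ hn₁ hn₂ h1 h2
  have hμ5 : 5 ≤ μ := by omega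
  have hμpos : (0 : ℝ) < μ := by exact_mod_cast (by omega : 0 < μ)
  have hδR : (1 : ℝ) ≤ δ := by exact_mod_cast hδ
  -- From h1: the factor is positive, hence (δ+2)^2 < μ.
  have hfac : 0 < Real.log μ - 2 * Real.log (δ + 2) - 1 := by
    by_contra hc
    push_neg at hc
    have hle : (μ : ℝ) * (Real.log μ - 2 * Real.log (δ + 2) - 1) ≤ 0 :=
      mul_nonpos_of_nonneg_of_nonpos (le_of_lt hμpos) hc
    have h2' : (2 : ℝ) ≤ (n₁ : ℝ) + n₂ := by
      have : 2 ≤ n₁ + n₂ := by omega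
      exact_mod_cast this
    linarith
  have hsqR : ((δ : ℝ) + 2) ^ 2 < μ := by
    have hlog : Real.log (((δ : ℝ) + 2) ^ 2) < Real.log μ := by
      rw [Real.log_pow]
      push_cast
      linarith
    exact (Real.log_lt_log_iff (by positivity) hμpos).mp hlog
  have hsqN : δ * δ + 4 * δ + 4 < μ := by
    have : ((δ * δ + 4 * δ + 4 : ℕ) : ℝ) < μ := by push_cast; nlinarith
    exact_mod_cast this
  set m := μ / 2 with hm
  have hm1 : δ + 2 ≤ m := by omega
  have hm2 : m ≤ μ - 1 := by omega
  have hmcast : 2 * (m : ℝ) ≤ μ := by exact_mod_cast (by omega : 2 * m ≤ μ)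
  have hmcast2 : (μ : ℝ) ≤ 2 * ((m : ℝ) + 1) := by
    have : μ ≤ 2 * (m + 1) := by omega
    exact_mod_cast this
  -- split the sum
  have hIoc : Finset.Ioc (δ + 2) m = Finset.Icc (δ + 3) m := by
    ext x; simp only [Finset.mem_Ioc, Finset.mem_Icc]; omega
  have hsplit : ∑ i ∈ Finset.Icc (δ + 3) (μ - 1), μ / i
      = ∑ i ∈ Finset.Ioc (δ + 2) m, μ / i + ∑ i ∈ Finset.Ioc m (μ - 1), μ / i := by
    have hIoc2 : Finset.Ioc (δ + 2) (μ - 1) = Finset.Icc (δ + 3) (μ - 1) := by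
      ext x; simp only [Finset.mem_Ioc, Finset.mem_Icc]; omega
    rw [Finset.sum_Ioc_consecutive _ hm1 hm2, hIoc2]
  -- second sum ≥ number of terms
  have hS2 : μ - 1 - m ≤ ∑ i ∈ Finset.Ioc m (μ - 1), μ / i := by
    calc μ - 1 - m = ∑ _i ∈ Finset.Ioc m (μ - 1), 1 := by
          rw [Finset.sum_const, Nat.card_Ioc, smul_eq_mul, mul_one]
      _ ≤ ∑ i ∈ Finset.Ioc m (μ - 1), μ / i := by
          apply Finset.sum_le_sum
          intro i hi
          rw [Finset.mem_Ioc] at hi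
          exact (Nat.one_le_div_iff (by omega)).mpr (by omega)
  -- harmonic bound on the first range
  have hharm : Real.log ((m : ℝ) + 1) - Real.log ((δ : ℝ) + 3)
      ≤ ∑ i ∈ Finset.Ioc (δ + 2) m, (1 : ℝ) / i := by
    have h := harm_lb (δ + 3) m (by omega)
    rw [Finset.Ico_add_one_right_eq_Icc] at h
    rw [hIoc]
    calc Real.log ((m : ℝ) + 1) - Real.log ((δ : ℝ) + 3)
        = Real.log ((m : ℕ) + 1 : ℝ) - Real.log ((δ + 3 : ℕ) : ℝ) := by push_cast; ring_nf
      _ ≤ _ := h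
  -- first sum, real bound
  have hS1 : (μ : ℝ) * (Real.log ((m : ℝ) + 1) - Real.log ((δ : ℝ) + 3)) - ((m : ℝ) - (δ + 2))
      ≤ ∑ i ∈ Finset.Ioc (δ + 2) m, ((μ / i : ℕ) : ℝ) := by
    have hterm : ∀ i ∈ Finset.Ioc (δ + 2) m,
        (μ : ℝ) * (1 / i) - 1 ≤ ((μ / i : ℕ) : ℝ) := by
      intro i hi
      rw [Finset.mem_Ioc] at hi
      have hipos : 0 < i := by omega
      have hiposR : (0 : ℝ) < i := by exact_mod_cast hipos
      have hdm := Nat.div_add_mod μ i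
      have hmod := Nat.mod_lt μ hipos
      have hdmR : (i : ℝ) * ((μ / i : ℕ) : ℝ) + ((μ % i : ℕ) : ℝ) = μ := by exact_mod_cast hdm
      have hmodR : ((μ % i : ℕ) : ℝ) < i := by exact_mod_cast hmod
      rw [mul_one_div, div_sub_one (ne_of_gt hiposR), div_le_iff₀ hiposR]
      nlinarith
    have hsum : ∑ i ∈ Finset.Ioc (δ + 2) m, ((μ : ℝ) * (1 / i) - 1)
        ≤ ∑ i ∈ Finset.Ioc (δ + 2) m, ((μ / i : ℕ) : ℝ) := Finset.sum_le_sum hterm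
    have hcard : ((Finset.Ioc (δ + 2) m).card : ℝ) = (m : ℝ) - (δ + 2) := by
      rw [Nat.card_Ioc]
      have : ((m - (δ + 2) : ℕ) : ℝ) = (m : ℝ) - (δ + 2) := by
        have h' : m - (δ + 2) + (δ + 2) = m := by omega
        have := congrArg (Nat.cast : ℕ → ℝ) h'
        push_cast at this
        linarith
      exact this
    have heq : ∑ i ∈ Finset.Ioc (δ + 2) m, ((μ : ℝ) * (1 / i) - 1)
        = (μ : ℝ) * (∑ i ∈ Finset.Ioc (δ + 2) m, (1 : ℝ) / i) - ((m : ℝ) - (δ + 2)) := by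
      rw [Finset.sum_sub_distrib, ← Finset.mul_sum, Finset.sum_const, nsmul_eq_mul,
        mul_one, hcard]
    have hmul : (μ : ℝ) * (Real.log ((m : ℝ) + 1) - Real.log ((δ : ℝ) + 3))
        ≤ (μ : ℝ) * (∑ i ∈ Finset.Ioc (δ + 2) m, (1 : ℝ) / i) :=
      mul_le_mul_of_nonneg_left hharm (le_of_lt hμpos)
    linarith [heq ▸ hsum]
  -- log comparisons
  have hA : Real.log μ ≤ Real.log 2 + Real.log ((m : ℝ) + 1) := by
    rw [← Real.log_mul two_ne_zero (by positivity)]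
    exact Real.log_le_log hμpos hmcast2
  have hB : Real.log 2 + Real.log ((δ : ℝ) + 3) ≤ 2 * Real.log ((δ : ℝ) + 2) := by
    have h' : Real.log (2 * ((δ : ℝ) + 3)) ≤ Real.log (((δ : ℝ) + 2) ^ 2) :=
      Real.log_le_log (by positivity) (by nlinarith)
    rw [Real.log_mul two_ne_zero (by positivity), Real.log_pow] at h'
    push_cast at h'
    linarith
  have hkey : Real.log μ - 2 * Real.log ((δ : ℝ) + 2)
      ≤ Real.log ((m : ℝ) + 1) - Real.log ((δ : ℝ) + 3) := by linarith
  have hkeymul : (μ : ℝ) * (Real.log μ - 2 * Real.log ((δ : ℝ) + 2))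
      ≤ (μ : ℝ) * (Real.log ((m : ℝ) + 1) - Real.log ((δ : ℝ) + 3)) :=
    mul_le_mul_of_nonneg_left hkey (le_of_lt hμpos)
  -- assemble in ℝ
  rw [← Nat.cast_le (α := ℝ)]
  rw [hsplit]
  push_cast [Nat.cast_sum]
  have hS2R : ((μ : ℝ) - 1 - m) ≤ ∑ i ∈ Finset.Ioc m (μ - 1), ((μ / i : ℕ) : ℝ) := by
    have hc : ((μ - 1 - m : ℕ) : ℝ) = (μ : ℝ) - 1 - m := by
      have h' : μ - 1 - m + (1 + m) = μ := by omega
      have := congrArg (Nat.cast : ℕ → ℝ) h'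
      push_cast at this
      linarith
    calc (μ : ℝ) - 1 - m = ((μ - 1 - m : ℕ) : ℝ) := hc.symm
      _ ≤ ∑ i ∈ Finset.Ioc m (μ - 1), ((μ / i : ℕ) : ℝ) := by
          exact_mod_cast hS2
  linarith [hS1, hS2R, hkeymul, h1]
end
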